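/- arXiv:2210.06259 — 2 statements merged into one kernel-verified Lean document; each statement's English description precedes it below -/
import Mathlib

section
/- Let β, κ, λ, T, Φ, X, Y, R be real numbers with 1 + βκΦ ≠ 0 and κ ≠ 0. Set V'(Φ) = β, H = −3β²κ/(1 + βκΦ), H' = 3β³κ²/(1 + βκΦ)², and Ω = R·β − (1/2)H'·X − H·Y. Suppose R satisfies the trace constraint −(1/κ + βΦ)·R = 3βY + (1/2)H·X − Ω·Φ − T − 4λ/κ. Then Ω = β(κT + 4λ); in particular Ω is independent of Φ, X and Y. -/
/-!
Write `D = 1 + βκΦ`. Eliminating `Ω` from the trace constraint, the coefficient of `R` collapses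
to `-1/κ`, and the coupling `H = -3β²κ/D` together with its derivative `H'` satisfy
`βκ(3β + HΦ) = -H` and `βκ(H + H'Φ) = -H'`. Hence the constraint reads
`βR = β(κT + 4λ) + HY + ½H'X`, and the `X`- and `Y`-terms of `Ω = Rβ - ½H'X - HY` cancel.
-/

theorem mass_eq_of_trace_constraint {β κ lam T Φ X Y R Ω H H' : ℝ} (hκ : κ ≠ 0)
    (hY : β * κ * (3 * β + H * Φ) = -H) (hX : β * κ * (H + H' * Φ) = -H')
    (hΩ : Ω = R * β - (1 / 2) * H' * X - H * Y)
    (hR : -(1 / κ + β * Φ) * R = 3 * β * Y + (1 / 2) * H * X - Ω * Φ - T - 4 * lam / κ) :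
    Ω = β * (κ * T + 4 * lam) := by
  have hκκ : κ * (1 / κ) = 1 := mul_one_div_cancel hκ
  linear_combination (1 + β * κ * Φ) * hΩ - β * κ * hR - Y * hY - (1 / 2) * X * hX
    - β * (R - 4 * lam) * hκκ

section Coupling

variable {β κ Φ : ℝ}

theorem beta_kappa_mul_three_beta_add_coupling_mul (hD : 1 + β * κ * Φ ≠ 0) :
    β * κ * (3 * β + -3 * β ^ 2 * κ / (1 + β * κ * Φ) * Φ) =
      -(-3 * β ^ 2 * κ / (1 + β * κ * Φ)) := by
  field_simp
  ring

theorem beta_kappa_mul_coupling_add_deriv_mul (hD : 1 + β * κ * Φ ≠ 0) :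
    β * κ * (-3 * β ^ 2 * κ / (1 + β * κ * Φ) + 3 * β ^ 3 * κ ^ 2 / (1 + β * κ * Φ) ^ 2 * Φ) =
      -(3 * β ^ 3 * κ ^ 2 / (1 + β * κ * Φ) ^ 2) := by
  field_simp
  ring

end Coupling

/-- Vector-field cancellation theorem: under the trace constraint of the
modified Einstein equations, the mass coefficient `Ω` is independent of
`Φ`, `X`, `Y` and equals `β(κT + 4λ)`. -/
theorem vector_mass_cancellation (β κ lam T Φ X Y R Ω : ℝ)
    (hD : 1 + β * κ * Φ ≠ 0) (hκ : κ ≠ 0)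
    (hΩ : Ω = R * β - (1 / 2) * (3 * β ^ 3 * κ ^ 2 / (1 + β * κ * Φ) ^ 2) * X
      - (-3 * β ^ 2 * κ / (1 + β * κ * Φ)) * Y)
    (hR : -(1 / κ + β * Φ) * R =
      3 * β * Y + (1 / 2) * (-3 * β ^ 2 * κ / (1 + β * κ * Φ)) * X
        - Ω * Φ - T - 4 * lam / κ) :
    Ω = β * (κ * T + 4 * lam) :=
  mass_eq_of_trace_constraint hκ (beta_kappa_mul_three_beta_add_coupling_mul hD)
    (beta_kappa_mul_coupling_add_deriv_mul hD) hΩ hR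
end

section
/- Under the hypotheses of the vector-field cancellation theorem, if both the matter trace T and the vacuum term λ vanish, then Ω = 0, so the field equation reduces to the massless Maxwell form W^{αν}{}_{;ν} = 0. -/
/-!
Multiply the trace constraint by `βκ` and substitute `βR` from the definition of `Ω`. Since
`(1 + βκΦ) H = -3β²κ` and `(1 + βκΦ) H' = -βκ H`, the `X` and `Y` terms cancel, leaving
`Ω = β (κ T + 4λ)`, which vanishes when `T = λ = 0`.
-/

theorem mass_coeff_eq {β κ Φ X Y R T Λ Ω H H' : ℝ}
    (hH : (1 + β * κ * Φ) * H = -3 * β ^ 2 * κ) (hH' : (1 + β * κ * Φ) * H' = -(β * κ * H))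
    (hΩ : Ω = β * R - (1 / 2) * H' * X - H * Y)
    (hR : -(1 + β * κ * Φ) * R = κ * (3 * β * Y + (1 / 2) * H * X - Ω * Φ - T) - 4 * Λ) :
    Ω = β * (κ * T + 4 * Λ) := by
  linear_combination (1 + β * κ * Φ) * hΩ - β * hR - (X / 2) * hH' - Y * hH

theorem trace_constraint_mul_kappa {κ Φ β R S Λ : ℝ} (hκ : κ ≠ 0)
    (h : -(1 / κ + β * Φ) * R = S - 4 * Λ / κ) :
    -(1 + β * κ * Φ) * R = κ * S - 4 * Λ := by
  have := congrArg (κ * ·) h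
  field_simp at this
  linear_combination this

/-- With vanishing matter trace and vanishing vacuum term, the mass
coefficient vanishes, `Ω = 0`, so the field equation is Maxwell's. -/
theorem vector_massless (β κ Φ X Y R Ω : ℝ)
    (hD : 1 + β * κ * Φ ≠ 0) (hκ : κ ≠ 0)
    (hΩ : Ω = β * R - (1 / 2) * (3 * β ^ 3 * κ ^ 2 / (1 + β * κ * Φ) ^ 2) * X
      - (-3 * β ^ 2 * κ / (1 + β * κ * Φ)) * Y)
    (hR : -(1 / κ + β * Φ) * R =
      3 * β * Y + (1 / 2) * (-3 * β ^ 2 * κ / (1 + β * κ * Φ)) * X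
        - Ω * Φ - (0 : ℝ) - 4 * (0 : ℝ) / κ) :
    Ω = 0 := by
  have hH : (1 + β * κ * Φ) * (-3 * β ^ 2 * κ / (1 + β * κ * Φ)) = -3 * β ^ 2 * κ := by
    field_simp
  have hH' : (1 + β * κ * Φ) * (3 * β ^ 3 * κ ^ 2 / (1 + β * κ * Φ) ^ 2)
      = -(β * κ * (-3 * β ^ 2 * κ / (1 + β * κ * Φ))) := by
    field_simp
  simpa using mass_coeff_eq hH hH' hΩ (trace_constraint_mul_kappa hκ hR)
end
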